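/- arXiv:1910.07400 — 5 statements merged into one kernel-verified Lean document; each statement's English description precedes it below -/
import Mathlib

section
/- Let G be a group. The core quandle Core(G) admits a stabilizing family of odd order 2k+1 if and only if every element of G satisfies g² = 1 (i.e., G is an elementary abelian 2-group). -/
private lemma core_fold_form {G : Type*} [Group G] :
    ∀ l : List G,
      (Odd l.length → ∃ u v : G, ∀ a : G,
        l.foldl (fun a y => y * a⁻¹ * y) a = u * a⁻¹ * v) ∧
      (Even l.length → ∃ u v : G, ∀ a : G,
        l.foldl (fun a y => y * a⁻¹ * y) a = u * a * v) := by
  intro l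
  induction l with
  | nil =>
    constructor
    · intro h; simp at h
    · intro _; exact ⟨1, 1, by simp⟩
  | cons y l ih =>
    constructor
    · intro h
      have hev : Even l.length := by
        rw [List.length_cons, Nat.odd_add_one, Nat.not_odd_iff_even] at h; exact h
      obtain ⟨u, v, huv⟩ := ih.2 hev
      refine ⟨u * y, y * v, fun a => ?_⟩
      simp only [List.foldl_cons]
      rw [huv (y * a⁻¹ * y)]; group
    · intro h
      have hod : Odd l.length := by
        rw [List.length_cons, Nat.even_add_one, Nat.not_even_iff_odd] at h; exact h
      obtain ⟨u, v, huv⟩ := ih.1 hod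
      refine ⟨u * y⁻¹, y⁻¹ * v, fun a => ?_⟩
      simp only [List.foldl_cons]
      rw [huv (y * a⁻¹ * y)]; group

private lemma core_fold_replicate {G : Type*} [Group G]
    (hsq : ∀ g : G, g ^ 2 = 1) :
    ∀ (n : ℕ) (g : G),
      (List.replicate n (1 : G)).foldl (fun a y => y * a⁻¹ * y) g = g := by
  have hinv : ∀ g : G, g⁻¹ = g := fun g =>
    inv_eq_of_mul_eq_one_right (by rw [← pow_two]; exact hsq g)
  intro n
  induction n with
  | zero => intro g; simp
  | succ n ih =>
    intro g
    rw [List.replicate_succ, List.foldl_cons]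
    simpa [hinv g] using ih g

/-- `Core(G)` admits a stabilizing family of odd order `2k+1` iff every element of `G`
squares to the identity. -/
theorem core_odd_stable_iff (G : Type*) [Group G] (k : ℕ) :
    (∃ x : Fin (2 * k + 1) → G,
      ∀ g : G, (List.ofFn x).foldl (fun a y => y * a⁻¹ * y) g = g) ↔
    (∀ g : G, g ^ 2 = 1) := by
  constructor
  · rintro ⟨x, hx⟩ g
    have hlen : Odd (List.ofFn x).length := by
      rw [List.length_ofFn]; exact ⟨k, by ring⟩
    obtain ⟨u, v, huv⟩ := (core_fold_form (List.ofFn x)).1 hlen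
    have key : ∀ a : G, u * a⁻¹ * v = a := fun a => by rw [← huv a, hx a]
    have h1 : u * v = 1 := by simpa using key 1
    have hv : v = u⁻¹ := (inv_eq_of_mul_eq_one_right h1).symm
    subst hv
    have hu : u⁻¹ = u := by
      have h2 := key u
      rw [h1, one_mul] at h2
      exact h2
    have huu : u * u = 1 := by rw [hu] at h1; exact h1
    have h2 := key (u * g)
    simp only [mul_inv_rev, hu] at h2
    rw [mul_assoc] at h2
    have h3 : g⁻¹ * u * u = g := mul_left_cancel h2
    have hg : g⁻¹ = g := by rw [mul_assoc, huu, mul_one] at h3; exact h3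
    rw [pow_two]; nth_rewrite 1 [← hg]; exact inv_mul_cancel g
  · intro hsq
    refine ⟨fun _ => 1, fun g => ?_⟩
    have : List.ofFn (fun _ : Fin (2 * k + 1) => (1 : G)) = List.replicate (2 * k + 1) 1 := by
      simp [List.ofFn_const, List.replicate_succ]
    rw [this]
    exact core_fold_replicate hsq _ g
end

section
/- Let V be a nontrivial real (or rational) vector space with the quandle operation x ▷ y = (x + y)/2. Then this quandle has no stabilizing family: for every n ≥ 1 and every tuple (x₁, …, xₙ) in V, the composition R_{xₙ} ∘ ⋯ ∘ R_{x₁} is not the identity map on V. -/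
lemma avg_foldl_affine {V : Type*} [AddCommGroup V] [Module ℝ V] (l : List V) :
    ∀ v : V, l.foldl (fun m z => (2⁻¹ : ℝ) • (m + z)) v =
      ((2:ℝ)⁻¹)^l.length • v + l.foldl (fun m z => (2⁻¹ : ℝ) • (m + z)) 0 := by
  induction l with
  | nil => intro v; simp
  | cons a t ih =>
    intro v
    simp only [List.foldl_cons, List.length_cons]
    rw [ih ((2⁻¹ : ℝ) • (v + a)), ih ((2⁻¹ : ℝ) • (0 + a))]
    simp [smul_add, smul_smul, pow_succ, mul_comm]
    module

/-- On a nontrivial real vector space with `x ▷ y = (x + y)/2`, there is no stabilizing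
family of any order `n ≥ 1`. -/
theorem average_quandle_no_stabilizing (V : Type*) [AddCommGroup V] [Module ℝ V]
    [Nontrivial V] :
    ∀ (n : ℕ), 1 ≤ n → ∀ x : Fin n → V,
      ¬ (∀ v : V, (List.ofFn x).foldl (fun m z => (2⁻¹ : ℝ) • (m + z)) v = v) := by
  intro n hn x h
  obtain ⟨w, hw⟩ := exists_ne (0 : V)
  have h0 := h 0
  have hwv := h w
  rw [avg_foldl_affine] at h0 hwv
  rw [smul_zero, zero_add] at h0
  rw [h0, add_zero] at hwv
  have : (((2:ℝ)⁻¹)^(List.ofFn x).length - 1) • w = 0 := by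
    rw [sub_smul, one_smul, hwv, sub_self]
  rcases smul_eq_zero.mp this with hc | hc
  · have h1 : ((2:ℝ)⁻¹)^(List.ofFn x).length = 1 := by linarith [sub_eq_zero.mp hc]
    rw [List.length_ofFn] at h1
    have h2 : ((2:ℝ)⁻¹)^n < 1 := pow_lt_one₀ (by norm_num) (by norm_num) (by omega)
    linarith
  · exact hw hc
end

section
/- Let G be a group and n ≥ 1. The n-pivot 𝒫ⁿ(G) = {(x₁, …, xₙ) ∈ Gⁿ : x₁⋯xₙ ∈ Z(G)} is closed under the operation (x₁, …, xₙ) ▷ (y₁, …, yₙ) = (yₙ⁻¹ xₙ y₁, y₁⁻¹ x₁ y₂, …, y_{n-1}⁻¹ x_{n-1} yₙ), and this operation makes 𝒫ⁿ(G) a quandle. -/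
/-!
The cyclic product of `x ▷ y` telescopes to `yₙ⁻¹ xₙ x₁ ⋯ xₙ₋₁ yₙ`, a conjugate of `x₁ ⋯ xₙ`.
Since the center is a union of singleton conjugacy classes, `x ▷ y` lies in the pivot exactly when
`x` does; with the explicit inverse `xᵢ = yᵢ zᵢ₊₁ yᵢ₊₁⁻¹` of `· ▷ y` this gives closure and
bijectivity. Idempotency and right self-distributivity are coordinatewise group identities.
-/

theorem List.prod_ofFn_inv_mul_mul_succ {G : Type*} [Group G] {n : ℕ} (x : Fin n → G)
    (g : Fin (n + 1) → G) :
    (List.ofFn fun i => (g i.castSucc)⁻¹ * x i * g i.succ).prod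
      = (g 0)⁻¹ * (List.ofFn x).prod * g (Fin.last n) := by
  induction n with
  | zero => simp
  | succ n ih =>
    simp_rw [List.ofFn_succ, List.prod_cons, ← Fin.succ_castSucc]
    rw [ih (fun i => x i.succ) (fun i => g i.succ)]
    simp only [Fin.castSucc_zero, Fin.succ_zero_eq_one, Fin.succ_last]
    group

theorem Fin.succ_sub_one {m : ℕ} (i : Fin m) : i.succ - 1 = i.castSucc := by
  rw [← Fin.coeSucc_eq_succ, add_sub_cancel_right]

theorem Fin.zero_sub_one (m : ℕ) : (0 : Fin (m + 1)) - 1 = Fin.last m := by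
  rw [← Fin.last_add_one, add_sub_cancel_right]

namespace Pivot

variable {G : Type*} [Group G] {n : ℕ} [NeZero n]

def op (x y : Fin n → G) : Fin n → G := fun i => (y (i - 1))⁻¹ * x (i - 1) * y i

variable (G n) in
def carrier : Set (Fin n → G) := {x | (List.ofFn x).prod ∈ Subgroup.center G}

theorem isConj_prod_op (x y : Fin n → G) :
    IsConj (List.ofFn x).prod (List.ofFn (op x y)).prod := by
  obtain ⟨m, rfl⟩ := Nat.exists_eq_add_one_of_ne_zero (NeZero.ne n)
  have hx : (List.ofFn x).prod = (List.ofFn fun i => x i.castSucc).prod * x (Fin.last m) := by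
    rw [List.ofFn_succ' x]; simp
  rw [isConj_iff, List.ofFn_succ (f := op x y), List.prod_cons]
  simp only [op, Fin.succ_sub_one, Fin.zero_sub_one, List.prod_ofFn_inv_mul_mul_succ, hx]
  exact ⟨(y (Fin.last m))⁻¹ * x (Fin.last m), by group⟩

theorem op_mem_carrier_iff {x : Fin n → G} (y : Fin n → G) :
    op x y ∈ carrier G n ↔ x ∈ carrier G n := by
  have h := isConj_prod_op x y
  simp only [carrier, Set.mem_ofPred_eq, ← SetLike.mem_coe, Subgroup.coe_center]
  exact ⟨fun hc => h.eq_of_right_mem_center hc ▸ hc, fun hc => h.eq_of_left_mem_center hc ▸ hc⟩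

def opRight (y : Fin n → G) : (Fin n → G) ≃ (Fin n → G) where
  toFun x := op x y
  invFun z i := y i * z (i + 1) * (y (i + 1))⁻¹
  left_inv x := by funext i; simp only [op, add_sub_cancel_right]; group
  right_inv z := by funext i; simp only [op, sub_add_cancel]; group

theorem op_self (x : Fin n → G) : op x x = x := by
  funext i; simp only [op]; group

theorem op_op (x y z : Fin n → G) : op (op x y) z = op (op x z) (op y z) := by
  funext i; simp only [op]; group

end Pivot

/-- The `n`-pivot `𝒫ⁿ(G) = {x ∈ Gⁿ : x₁⋯xₙ ∈ Z(G)}` is closed under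
`(x ▷ y)ᵢ = y_{i-1}⁻¹ x_{i-1} y_i` (indices cyclic), and this operation makes it a
quandle. -/
theorem pivot_quandle (G : Type*) [Group G] (n : ℕ) [NeZero n] :
    let op : (Fin n → G) → (Fin n → G) → (Fin n → G) :=
      fun x y i => (y (i - 1))⁻¹ * x (i - 1) * y i
    let P : Set (Fin n → G) := {x | (List.ofFn x).prod ∈ Subgroup.center G}
    (∀ x ∈ P, ∀ y ∈ P, op x y ∈ P) ∧
    (∀ x ∈ P, op x x = x) ∧
    (∀ y ∈ P, Set.BijOn (fun x => op x y) P P) ∧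
    (∀ x ∈ P, ∀ y ∈ P, ∀ z ∈ P, op (op x y) z = op (op x z) (op y z)) :=
  ⟨fun _ hx y _ => (Pivot.op_mem_carrier_iff y).2 hx,
    fun x _ => Pivot.op_self x,
    fun y _ => (Pivot.opRight y).bijOn fun _ => Pivot.op_mem_carrier_iff y,
    fun x _ y _ z _ => Pivot.op_op x y z⟩
end

section
/- Let X be a nonempty quandle. The quandle structure on X is trivial (x ▷ y = x for all x, y) if and only if there exists a nonempty set M with a rack action of X on M that is faithful and satisfies (m·x)·y = (m·y)·x for all x, y ∈ X and m ∈ M. -/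
/-- A nonempty quandle `X` is trivial iff it admits a faithful rack action on some
nonempty set `M` satisfying `(m·x)·y = (m·y)·x`. -/
theorem trivial_iff_faithful_commuting_action (X : Type) [Nonempty X] (op : X → X → X)
    (hidem : ∀ x, op x x = x)
    (hbij : ∀ y : X, Function.Bijective (fun x => op x y))
    (hdist : ∀ x y z : X, op (op x y) z = op (op x z) (op y z)) :
    (∀ x y : X, op x y = x) ↔
    ∃ (M : Type) (_ : Nonempty M) (a : M → X → M),
      (∀ x : X, Function.Bijective (fun m => a m x)) ∧
      (∀ (m : M) (x y : X), a (a m x) y = a (a m y) (op x y)) ∧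
      (∀ m : M, Function.Injective (fun x => a m x)) ∧
      (∀ (m : M) (x y : X), a (a m x) y = a (a m y) x) := by
  classical
  constructor
  · intro htriv
    refine ⟨X → ℤ, ⟨fun _ => 0⟩, fun m x => fun y => if y = x then m y + 1 else m y,
      ?_, ?_, ?_, ?_⟩
    · intro x
      constructor
      · intro m m' h
        funext y
        have := congrFun h y
        dsimp at this
        split_ifs at this <;> omega
      · intro m
        refine ⟨fun y => if y = x then m y - 1 else m y, ?_⟩
        funext y
        by_cases hy : y = x <;> simp [hy]
    · intro m x y
      rw [htriv x y]
      funext z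
      dsimp
      split_ifs <;> omega
    · intro m x x' h
      simp only at h
      have hx := congrFun h x
      by_cases hxx : x = x'
      · exact hxx
      · exfalso
        rw [if_pos rfl] at hx
        split_ifs at hx <;> omega
    · intro m x y
      funext z
      dsimp
      split_ifs <;> omega
  · rintro ⟨M, ⟨m0⟩, a, _, hact, hfaith, hcomm⟩ x y
    have h := (hact m0 x y).symm.trans (hcomm m0 x y)
    exact hfaith (a m0 y) h
end

section
/- Let k be a ring of characteristic zero and (X, ▷) a quandle that is not trivial (there exist x, y with x ▷ y ≠ x). Then the quandle ring k[X] is not power associative; in particular, there exists an element u ∈ k[X] such that u²·u ≠ u·u² or u²·u² ≠ (u²·u)·u. -/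
/-- Multiplication of the quandle ring `k[X]`, extended bilinearly from `x · y = x ▷ y`. -/
noncomputable def quandleRingMul {X : Type*} {k : Type*} [CommRing k]
    (q : X → X → X) (f g : X →₀ k) : X →₀ k :=
  f.sum fun x a => g.sum fun y b => Finsupp.single (q x y) (a * b)

section lemmas
variable {X : Type*} {k : Type*} [CommRing k] (q : X → X → X)

lemma qrm_single_single (a b : X) (c d : k) :
    quandleRingMul q (Finsupp.single a c) (Finsupp.single b d)
      = Finsupp.single (q a b) (c * d) := by
  classical
  unfold quandleRingMul
  rw [Finsupp.sum_single_index (by simp), Finsupp.sum_single_index (by simp)]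

lemma qrm_add_left (f g h : X →₀ k) :
    quandleRingMul q (f + g) h = quandleRingMul q f h + quandleRingMul q g h := by
  classical
  unfold quandleRingMul
  rw [Finsupp.sum_add_index']
  · intro x
    simp
  · intro x b₁ b₂
    simp [add_mul, Finsupp.single_add, Finsupp.sum_add]

lemma qrm_add_right (f g h : X →₀ k) :
    quandleRingMul q f (g + h) = quandleRingMul q f g + quandleRingMul q f h := by
  classical
  unfold quandleRingMul
  rw [← Finsupp.sum_add]
  refine Finsupp.sum_congr fun x _ => ?_
  rw [Finsupp.sum_add_index']
  · intro y; simp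
  · intro y b₁ b₂; simp [mul_add, Finsupp.single_add]

lemma qrm_smul_left (c : k) (f g : X →₀ k) :
    quandleRingMul q (c • f) g = c • quandleRingMul q f g := by
  classical
  unfold quandleRingMul
  rw [Finsupp.sum_smul_index (by intro i; simp), Finsupp.smul_sum]
  refine Finsupp.sum_congr fun x _ => ?_
  rw [Finsupp.smul_sum]
  refine Finsupp.sum_congr fun y _ => ?_
  rw [Finsupp.smul_single, smul_eq_mul, mul_assoc]

lemma qrm_smul_right (c : k) (f g : X →₀ k) :
    quandleRingMul q f (c • g) = c • quandleRingMul q f g := by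
  classical
  unfold quandleRingMul
  rw [Finsupp.smul_sum]
  refine Finsupp.sum_congr fun x _ => ?_
  rw [Finsupp.sum_smul_index (by intro i; simp), Finsupp.smul_sum]
  refine Finsupp.sum_congr fun y _ => ?_
  rw [Finsupp.smul_single, smul_eq_mul, mul_left_comm]

end lemmas

/-- If `k` has characteristic zero and the quandle `(X, ▷)` is nontrivial, then the
quandle ring `k[X]` is not power associative: some `u` fails `u²u = u u²` or
`u²u² = (u²u)u`. -/
theorem quandle_ring_not_power_associative (X : Type*) (k : Type*) [CommRing k]
    [CharZero k] (q : X → X → X)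
    (hidem : ∀ x, q x x = x)
    (hbij : ∀ y : X, Function.Bijective (fun x => q x y))
    (hdist : ∀ x y z : X, q (q x y) z = q (q x z) (q y z))
    (hnt : ∃ x y : X, q x y ≠ x) :
    ∃ u : X →₀ k,
      quandleRingMul q (quandleRingMul q u u) u ≠
        quandleRingMul q u (quandleRingMul q u u) ∨
      quandleRingMul q (quandleRingMul q u u) (quandleRingMul q u u) ≠
        quandleRingMul q (quandleRingMul q (quandleRingMul q u u) u) u := by
  classical
  by_contra hcon
  push_neg at hcon
  obtain ⟨x, y, hxy⟩ := hnt
  have F : ∀ a b : X, q a b = b → a = b := by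
    intro a b h
    exact (hbij b).injective (show q a b = q b b by rw [h, hidem])
  have hxz : q x (q x y) ≠ q x y := fun h => hxy (F x (q x y) h).symm
  have hdx : q (q x y) x = q x (q y x) := by
    have := hdist x y x; rwa [hidem] at this
  -- the three test elements
  set sx : X →₀ k := Finsupp.single x 1 with hsx
  set sy : X →₀ k := Finsupp.single y 1 with hsy
  -- first graded identity (degree (2,1) part of u²u = uu²)
  have key1 : quandleRingMul q (quandleRingMul q ((2:k) • sx + sy) ((2:k) • sx + sy)) ((2:k) • sx + sy)
        - quandleRingMul q ((2:k) • sx + sy) (quandleRingMul q ((2:k) • sx + sy) ((2:k) • sx + sy))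
        - (2:k) • (quandleRingMul q (quandleRingMul q (sx + sy) (sx + sy)) (sx + sy)
            - quandleRingMul q (sx + sy) (quandleRingMul q (sx + sy) (sx + sy)))
      = (2:k) • ((Finsupp.single (q x y) (1:k) + Finsupp.single (q (q x y) x) (1:k)
            + Finsupp.single (q (q y x) x) (1:k))
          - (Finsupp.single (q y x) (1:k) + Finsupp.single (q x (q x y)) (1:k)
            + Finsupp.single (q x (q y x)) (1:k))) := by
    simp only [hsx, hsy, qrm_add_left, qrm_add_right, qrm_smul_left, qrm_smul_right,
      qrm_single_single, hidem, one_mul, mul_one, smul_add, smul_sub, smul_smul]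
    module
  have h1 : (2:k) • ((Finsupp.single (q x y) (1:k) + Finsupp.single (q (q x y) x) (1:k)
            + Finsupp.single (q (q y x) x) (1:k))
          - (Finsupp.single (q y x) (1:k) + Finsupp.single (q x (q x y)) (1:k)
            + Finsupp.single (q x (q y x)) (1:k))) = 0 := by
    rw [← key1, (hcon ((2:k) • sx + sy)).1, (hcon (sx + sy)).1]
    simp
  -- u²u² = (u²u)u, isolating degree (3,1)
  have key2 : (2:k) • (quandleRingMul q (quandleRingMul q ((2:k) • sx + sy) ((2:k) • sx + sy)) (quandleRingMul q ((2:k) • sx + sy) ((2:k) • sx + sy))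
          - quandleRingMul q (quandleRingMul q (quandleRingMul q ((2:k) • sx + sy) ((2:k) • sx + sy)) ((2:k) • sx + sy)) ((2:k) • sx + sy))
        + (quandleRingMul q (quandleRingMul q (sx + (2:k) • sy) (sx + (2:k) • sy)) (quandleRingMul q (sx + (2:k) • sy) (sx + (2:k) • sy))
          - quandleRingMul q (quandleRingMul q (quandleRingMul q (sx + (2:k) • sy) (sx + (2:k) • sy)) (sx + (2:k) • sy)) (sx + (2:k) • sy))
        - (12:k) • (quandleRingMul q (quandleRingMul q (sx + sy) (sx + sy)) (quandleRingMul q (sx + sy) (sx + sy))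
          - quandleRingMul q (quandleRingMul q (quandleRingMul q (sx + sy) (sx + sy)) (sx + sy)) (sx + sy))
      = (6:k) • ((Finsupp.single (q x (q x y)) (1:k) + Finsupp.single (q x (q y x)) (1:k)
            + Finsupp.single (q (q x y) x) (1:k) + Finsupp.single (q (q y x) x) (1:k))
          - (Finsupp.single (q x y) (1:k) + Finsupp.single (q (q x y) x) (1:k)
            + Finsupp.single (q (q (q x y) x) x) (1:k) + Finsupp.single (q (q (q y x) x) x) (1:k))) := by
    simp only [hsx, hsy, qrm_add_left, qrm_add_right, qrm_smul_left, qrm_smul_right,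
      qrm_single_single, hidem, one_mul, mul_one, smul_add, smul_sub, smul_smul]
    module
  have h2 : (6:k) • ((Finsupp.single (q x (q x y)) (1:k) + Finsupp.single (q x (q y x)) (1:k)
            + Finsupp.single (q (q x y) x) (1:k) + Finsupp.single (q (q y x) x) (1:k))
          - (Finsupp.single (q x y) (1:k) + Finsupp.single (q (q x y) x) (1:k)
            + Finsupp.single (q (q (q x y) x) x) (1:k) + Finsupp.single (q (q (q y x) x) x) (1:k))) = 0 := by
    rw [← key2, (hcon ((2:k) • sx + sy)).2, (hcon (sx + (2:k) • sy)).2, (hcon (sx + sy)).2]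
    simp
  -- extract: q y x = q x y
  have hyx : q y x = q x y := by
    by_contra hne
    rw [hdx] at h1
    have hz := DFunLike.congr_fun h1 (q x y)
    simp only [Finsupp.smul_apply, Finsupp.sub_apply, Finsupp.add_apply,
      Finsupp.single_apply, Finsupp.coe_zero, Pi.zero_apply, smul_eq_mul] at hz
    simp only [if_neg hxz, if_neg hne, if_true] at hz
    split_ifs at hz <;> norm_num at hz
  have hzx : q (q x y) x = q x (q x y) := by rw [hdx, hyx]
  -- final contradiction from h2
  rw [hyx, hzx] at h2
  have hz2 := DFunLike.congr_fun h2 (q x (q x y))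
  simp only [Finsupp.smul_apply, Finsupp.sub_apply, Finsupp.add_apply,
    Finsupp.single_apply, Finsupp.coe_zero, Pi.zero_apply, smul_eq_mul] at hz2
  rcases eq_or_ne (q x y) (q x (q x y)) with c1 | c1
  · exact hxz c1.symm
  · rw [if_neg c1] at hz2
    split_ifs at hz2 <;> norm_num at hz2
end
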